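/- arXiv:1403.2587 — 9 statements merged into one kernel-verified Lean document; each statement's English description precedes it below -/
import Mathlib

section
/- The graph G8 obtained by gluing two 4-cycles along a common edge (vertices v1,...,v6 with edges v1v2, v2v3, v4v5, v5v6, v1v4, v2v5, v3v6) is not 2-choosable: there exists an assignment of 2-element colour lists to its vertices admitting no proper colouring in which each vertex is coloured from its list. -/
/-!
Give `v₂` and `v₅` the list `{1, 3}`, the outer vertices `v₁, v₆` the list `{1, 2}` and
`v₃, v₄` the list `{2, 3}`. The adjacent vertices `v₂, v₅` take the colours `1, 3` in some
order. If `v₂` gets `1` and `v₅` gets `3`, both `v₁` and `v₄` are forced to take `2`;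
otherwise `v₃` and `v₆` are. Either way an edge of the glued squares is monochromatic.
-/

/-- The graph `G₈`: two 4-cycles `v₁v₂v₅v₄` and `v₂v₃v₆v₅` glued along the edge
`v₂v₅` (vertices `0,…,5` standing for `v₁,…,v₆`). -/
def G8 : SimpleGraph (Fin 6) :=
  SimpleGraph.fromEdgeSet {s(0, 1), s(1, 2), s(3, 4), s(4, 5), s(0, 3), s(1, 4), s(2, 5)}

lemma colour_eq_of_adj_of_mem_pair {V α : Type*} [DecidableEq α] {G : SimpleGraph V}
    {c : V → α} (hc : ∀ u v, G.Adj u v → c u ≠ c v) {u x : V} (hux : G.Adj u x) {k : α}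
    (hu : c u ∈ ({c x, k} : Finset α)) : c u = k := by
  rw [Finset.mem_insert, Finset.mem_singleton] at hu
  exact hu.resolve_left (hc u x hux)

/-- `G₈` is not 2-choosable: some assignment of 2-element lists admits no proper
list colouring. -/
theorem G8_not_two_choosable :
    ∃ l : Fin 6 → Finset ℕ, (∀ v, (l v).card = 2) ∧
      ¬ ∃ c : Fin 6 → ℕ, (∀ v, c v ∈ l v) ∧
        ∀ u v, G8.Adj u v → c u ≠ c v := by
  refine ⟨![{1, 2}, {1, 3}, {3, 2}, {3, 2}, {1, 3}, {1, 2}], by decide, ?_⟩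
  rintro ⟨c, hl, hc⟩
  obtain ⟨h1, h4⟩ | ⟨h1, h4⟩ : c 1 = 1 ∧ c 4 = 3 ∨ c 1 = 3 ∧ c 4 = 1 := by
    have h1 := hl 1
    have h4 := hl 4
    have h14 := hc 1 4 (by simp [G8])
    simp only [Fin.isValue, Matrix.cons_val, Finset.mem_insert, Finset.mem_singleton] at h1 h4
    omega
  · have h0 := colour_eq_of_adj_of_mem_pair hc (u := 0) (x := 1) (by simp [G8])
      (by rw [h1]; exact hl 0)
    have h3 := colour_eq_of_adj_of_mem_pair hc (u := 3) (x := 4) (by simp [G8])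
      (by rw [h4]; exact hl 3)
    exact hc 0 3 (by simp [G8]) (h0.trans h3.symm)
  · have h2 := colour_eq_of_adj_of_mem_pair hc (u := 2) (x := 1) (by simp [G8])
      (by rw [h1]; exact hl 2)
    have h5 := colour_eq_of_adj_of_mem_pair hc (u := 5) (x := 4) (by simp [G8])
      (by rw [h4]; exact hl 5)
    exact hc 2 5 (by simp [G8]) (h2.trans h5.symm)
end

section
/- Let G8 be the graph on vertices v1,...,v6 with edges v1v2, v2v3, v4v5, v5v6, v1v4, v2v5, v3v6 (two 4-cycles sharing the edge v2v5). If L is any assignment of 2-element lists to the vertices of G8 such that L(v1) = L(v4), then G8 is L-list colourable. -/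
/-!
The 4-cycle `v₂v₃v₆v₅` is 2-choosable, like every even cycle: unless all four lists coincide
(then colour alternately), some list contains a colour `b` missing from its predecessor's list;
colour greedily around the cycle starting after `b`, and the predecessor can still avoid `b`.
The remaining vertices `v₁, v₄` share the list `{x, y}`; since `v₂` and `v₅` got different
colours, one of the two ways of putting `x, y` on `v₁, v₄` avoids both of them.
-/

namespace Finset

variable {α : Type*} {A B C D : Finset α}

theorem exists_cycle4_coloring_of_not_subset (hA : 1 < #A) (hC : 1 < #C) (hD : 1 < #D)
    (hBA : ¬B ⊆ A) :
    ∃ a ∈ A, ∃ b ∈ B, ∃ c ∈ C, ∃ d ∈ D, a ≠ b ∧ b ≠ c ∧ c ≠ d ∧ d ≠ a := by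
  obtain ⟨b, hb, hbA⟩ := not_subset.mp hBA
  obtain ⟨c, hc, hcb⟩ := exists_mem_ne hC b
  obtain ⟨d, hd, hdc⟩ := exists_mem_ne hD c
  obtain ⟨a, ha, had⟩ := exists_mem_ne hA d
  exact ⟨a, ha, b, hb, c, hc, d, hd, fun hab => hbA (hab ▸ ha), hcb.symm, hdc.symm, had.symm⟩

theorem exists_cycle4_coloring (hA : 1 < #A) (hB : 1 < #B) (hC : 1 < #C) (hD : 1 < #D) :
    ∃ a ∈ A, ∃ b ∈ B, ∃ c ∈ C, ∃ d ∈ D, a ≠ b ∧ b ≠ c ∧ c ≠ d ∧ d ≠ a := by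
  by_cases hBA : B ⊆ A
  swap
  · exact exists_cycle4_coloring_of_not_subset hA hC hD hBA
  by_cases hCB : C ⊆ B
  swap
  · obtain ⟨b, hb, c, hc, d, hd, a, ha, hbc, hcd, hda, hab⟩ :=
      exists_cycle4_coloring_of_not_subset hB hD hA hCB
    exact ⟨a, ha, b, hb, c, hc, d, hd, hab, hbc, hcd, hda⟩
  by_cases hDC : D ⊆ C
  swap
  · obtain ⟨c, hc, d, hd, a, ha, b, hb, hcd, hda, hab, hbc⟩ :=
      exists_cycle4_coloring_of_not_subset hC hA hB hDC
    exact ⟨a, ha, b, hb, c, hc, d, hd, hab, hbc, hcd, hda⟩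
  by_cases hAD : A ⊆ D
  swap
  · obtain ⟨d, hd, a, ha, b, hb, c, hc, hda, hab, hbc, hcd⟩ :=
      exists_cycle4_coloring_of_not_subset hD hB hC hAD
    exact ⟨a, ha, b, hb, c, hc, d, hd, hab, hbc, hcd, hda⟩
  obtain ⟨x, hx, y, hy, hxy⟩ := one_lt_card.mp hA
  have hAB : A ⊆ B := hAD.trans (hDC.trans hCB)
  have hAC : A ⊆ C := hAD.trans hDC
  exact ⟨x, hx, y, hAB hy, x, hAC hx, y, hAD hy, hxy, hxy.symm, hxy, hxy.symm⟩

theorem exists_mem_mem_ne_avoiding (hA : 1 < #A) {u v : α} (huv : u ≠ v) :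
    ∃ x ∈ A, ∃ y ∈ A, x ≠ y ∧ x ≠ u ∧ y ≠ v := by
  obtain ⟨a, ha, b, hb, hab⟩ := one_lt_card.mp hA
  by_cases h : a ≠ u ∧ b ≠ v
  · exact ⟨a, ha, b, hb, hab, h.1, h.2⟩
  · refine ⟨b, hb, a, ha, hab.symm, ?_, ?_⟩ <;> grind

end Finset

theorem G8_adj_imp_ne {α : Type*} {c : Fin 6 → α} (h01 : c 0 ≠ c 1) (h12 : c 1 ≠ c 2)
    (h34 : c 3 ≠ c 4) (h45 : c 4 ≠ c 5) (h03 : c 0 ≠ c 3) (h14 : c 1 ≠ c 4) (h25 : c 2 ≠ c 5) :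
    ∀ u v, G8.Adj u v → c u ≠ c v := by
  intro u v huv
  simp only [G8, SimpleGraph.fromEdgeSet_adj, Set.mem_insert_iff, Set.mem_singleton_iff,
    Sym2.eq, Sym2.rel_iff'] at huv
  fin_cases u <;> fin_cases v <;> simp_all [Ne.symm]

/-- If `L` is a 2-element list assignment for `G₈` with `L v₁ = L v₄`, then `G₈`
is `L`-list colourable. -/
theorem G8_list_colourable_of_eq_lists
    (L : Fin 6 → Finset ℕ) (hcard : ∀ v, (L v).card = 2) (heq : L 0 = L 3) :
    ∃ c : Fin 6 → ℕ, (∀ v, c v ∈ L v) ∧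
      ∀ u v, G8.Adj u v → c u ≠ c v := by
  have hL : ∀ v, 1 < (L v).card := fun v => by rw [hcard v]; norm_num
  obtain ⟨c1, hc1, c2, hc2, c5, hc5, c4, hc4, h12, h25, h45, h14⟩ :=
    Finset.exists_cycle4_coloring (hL 1) (hL 2) (hL 5) (hL 4)
  obtain ⟨c0, hc0, c3, hc3, h03, h01, h34⟩ := Finset.exists_mem_mem_ne_avoiding (hL 0) h14.symm
  refine ⟨![c0, c1, c2, c3, c4, c5], ?_,
    G8_adj_imp_ne (c := ![c0, c1, c2, c3, c4, c5]) h01 h12 h34 h45.symm h03 h14.symm h25⟩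
  intro v
  fin_cases v
  exacts [hc0, hc1, hc2, heq ▸ hc3, hc4, hc5]
end

section
/- Let G be a graph on n vertices with list chromatic number s, and let t be a positive integer with t < s. Suppose that for every induced subgraph H of G one has χ(H) = χ_L(H) (chromatic number equals list chromatic number). Then for every assignment of t-element lists to the vertices of G, there is an induced subgraph of G on at least tn/s vertices that is properly colourable from those lists. -/
/-- `G` is `L`-list colourable: there is a proper colouring with every vertex
coloured from its own list. -/
def ListColourable {V : Type*} (G : SimpleGraph V) (L : V → Finset ℕ) : Prop :=
  ∃ c : V → ℕ, (∀ v, c v ∈ L v) ∧ ∀ u v, G.Adj u v → c u ≠ c v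

/-- `G` is `k`-choosable: `L`-list colourable for every `k`-element list assignment. -/
def Choosable {V : Type*} (G : SimpleGraph V) (k : ℕ) : Prop :=
  ∀ L : V → Finset ℕ, (∀ v, (L v).card = k) → ListColourable G L

/-- The list chromatic number: the least `k` such that `G` is `k`-choosable. -/
noncomputable def listChromaticNumber {V : Type*} (G : SimpleGraph V) : ℕ :=
  sInf {k | Choosable G k}

/-! Being `s`-choosable, `G` is `s`-colourable. Every vertex falls into the colours below `t`
for exactly `t` of the `s` cyclic shifts of an `s`-colouring, so some shift puts at least
`tn/s` vertices there. They induce a `t`-colourable subgraph, which by hypothesis is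
`t`-choosable and hence colourable from the given lists. -/

open Finset SimpleGraph

section

variable {V : Type*} {G : SimpleGraph V}

lemma Choosable.mono {k m : ℕ} (h : Choosable G k) (hkm : k ≤ m) : Choosable G m := by
  intro L hL
  have hsub : ∀ v, ∃ L' ⊆ L v, #L' = k := fun v =>
    exists_subset_card_eq (by rw [hL v]; exact hkm)
  choose L' hL'sub hL'card using hsub
  obtain ⟨c, hcL, hproper⟩ := h L' hL'card
  exact ⟨c, fun v => hL'sub v (hcL v), hproper⟩

lemma Choosable.colorable {k : ℕ} (h : Choosable G k) : G.Colorable k := by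
  obtain ⟨c, hc, hproper⟩ := h (fun _ => range k) (fun _ => card_range k)
  exact ⟨Coloring.mk (fun v => ⟨c v, mem_range.mp (hc v)⟩)
    fun huv heq => hproper _ _ huv (congrArg Fin.val heq)⟩

/-- Lists of size at least `|V|` admit a system of distinct representatives (Hall),
and an injective colouring is proper. -/
lemma choosable_of_card_le [Fintype V] {k : ℕ} (hk : Fintype.card V ≤ k) : Choosable G k := by
  intro L hL
  have hall : ∀ A : Finset V, #A ≤ #(A.biUnion L) := by
    intro A
    obtain rfl | ⟨a, ha⟩ := A.eq_empty_or_nonempty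
    · simp
    calc #A ≤ Fintype.card V := card_le_univ A
      _ ≤ #(L a) := hL a ▸ hk
      _ ≤ #(A.biUnion L) := card_le_card (subset_biUnion_of_mem L ha)
  obtain ⟨c, hinj, hcL⟩ := (all_card_le_biUnion_card_iff_exists_injective L).mp hall
  exact ⟨c, hcL, fun u v huv => hinj.ne huv.ne⟩

lemma choosable_listChromaticNumber [Fintype V] : Choosable G (listChromaticNumber G) :=
  Nat.sInf_mem (s := {k | Choosable G k}) ⟨_, choosable_of_card_le le_rfl⟩

lemma choosable_of_listChromaticNumber_le [Fintype V] {k : ℕ}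
    (hk : listChromaticNumber G ≤ k) : Choosable G k :=
  choosable_listChromaticNumber.mono hk

lemma ListColourable.exists_of_induce [DecidableEq V] {S : Finset V} {L : V → Finset ℕ}
    (h : ListColourable (G.induce (S : Set V)) (fun v => L v)) :
    ∃ c : V → ℕ, (∀ v ∈ S, c v ∈ L v) ∧ ∀ u ∈ S, ∀ v ∈ S, G.Adj u v → c u ≠ c v := by
  obtain ⟨c, hcL, hproper⟩ := h
  refine ⟨fun v => if hv : v ∈ S then c ⟨v, hv⟩ else 0, fun v hv => ?_, fun u hu v hv huv => ?_⟩
  · simpa [hv] using hcL ⟨v, hv⟩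
  · simpa [hu, hv] using hproper ⟨u, hu⟩ ⟨v, hv⟩ huv

lemma sum_card_filter_val_add_lt {s : ℕ} [NeZero s] [Fintype V] (c : V → Fin s) {t : ℕ}
    (hts : t ≤ s) : ∑ j : Fin s, #{v | ((c v + j : Fin s) : ℕ) < t} = t * Fintype.card V := by
  have hwindow : ∀ a : Fin s, ∑ j : Fin s, (if ((a + j : Fin s) : ℕ) < t then 1 else 0) = t := by
    intro a
    calc ∑ j : Fin s, (if ((a + j : Fin s) : ℕ) < t then 1 else 0)
        = ∑ k : Fin s, (if (k : ℕ) < t then 1 else 0) :=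
          Equiv.sum_comp (Equiv.addLeft a) (fun k : Fin s => if (k : ℕ) < t then 1 else 0)
      _ = t := by rw [← card_filter, Fin.card_filter_val_lt, min_eq_right hts]
  simp only [card_filter]
  rw [sum_comm]
  simp [hwindow, mul_comm]

lemma SimpleGraph.Colorable.exists_induce_colorable_card [Fintype V] {s t : ℕ}
    (hG : G.Colorable s) (hts : t ≤ s) (hs : 0 < s) :
    ∃ S : Finset V, t * Fintype.card V ≤ s * #S ∧ (G.induce (S : Set V)).Colorable t := by
  have : NeZero s := ⟨hs.ne'⟩
  obtain ⟨C⟩ := hG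
  obtain ⟨j, -, hj⟩ := exists_le_of_sum_le (f := fun _ : Fin s => t * Fintype.card V)
    (g := fun j => s * #{v | ((C v + j : Fin s) : ℕ) < t}) univ_nonempty
    (by simp [← mul_sum, sum_card_filter_val_add_lt C hts])
  refine ⟨_, hj, ⟨Coloring.mk (fun v => ⟨((C v + j : Fin s) : ℕ), (mem_filter.mp v.2).2⟩)
    fun huv heq => ?_⟩⟩
  exact C.valid huv (add_right_cancel (b := j) (Fin.ext (Fin.mk.inj heq)))

end

theorem partial_list_colouring_of_hereditary_chromatic_choosable_general
    {V : Type*} [Fintype V] (G : SimpleGraph V) (s t : ℕ)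
    (hs : listChromaticNumber G = s) (hts : t < s)
    (hher : ∀ S : Set V,
      (G.induce S).chromaticNumber = (listChromaticNumber (G.induce S) : ℕ∞))
    (L : V → Finset ℕ) (hL : ∀ v, (L v).card = t) :
    ∃ S : Finset V,
      (t * Fintype.card V : ℚ) / s ≤ S.card ∧
      ∃ c : V → ℕ, (∀ v ∈ S, c v ∈ L v) ∧
        ∀ u ∈ S, ∀ v ∈ S, G.Adj u v → c u ≠ c v := by
  classical
  have hGs : G.Colorable s := hs ▸ choosable_listChromaticNumber.colorable
  obtain ⟨S, hsize, hcol⟩ := hGs.exists_induce_colorable_card hts.le hts.pos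
  have hlist : listChromaticNumber (G.induce (S : Set V)) ≤ t := by
    exact_mod_cast hher S ▸ hcol.chromaticNumber_le
  refine ⟨S, ?_, (choosable_of_listChromaticNumber_le hlist _ fun v => hL v).exists_of_induce⟩
  rw [div_le_iff₀ (by exact_mod_cast hts.pos), mul_comm (#S : ℚ)]
  exact_mod_cast hsize

/-- If every induced subgraph of `G` has chromatic number equal to its list
chromatic number, then for every `t`-element list assignment (`0 < t < s = χ_L(G)`)
there is an induced subgraph on at least `t·n/s` vertices properly colourable from
the lists. -/
theorem partial_list_colouring_of_hereditary_chromatic_choosable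
    {V : Type*} [Fintype V] (G : SimpleGraph V) (s t : ℕ)
    (hs : listChromaticNumber G = s) (ht : 0 < t) (hts : t < s)
    (hher : ∀ S : Set V,
      (G.induce S).chromaticNumber = (listChromaticNumber (G.induce S) : ℕ∞))
    (L : V → Finset ℕ) (hL : ∀ v, (L v).card = t) :
    ∃ S : Finset V,
      (t * Fintype.card V : ℚ) / s ≤ S.card ∧
      ∃ c : V → ℕ, (∀ v ∈ S, c v ∈ L v) ∧
        ∀ u ∈ S, ∀ v ∈ S, G.Adj u v → c u ≠ c v :=
  partial_list_colouring_of_hereditary_chromatic_choosable_general G s t hs hts hher L hL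
end

section
/- Every chordless graph is 2-degenerate: if G is a graph in which no cycle has a chord, then every nonempty subgraph of G has a vertex of degree at most 2. -/
/-!
Take a longest path `p` inside `S`, starting at `a`. By maximality every neighbour of `a` in `S`
lies on `p`; let `u` be the one farthest along `p`. If `p` runs from `a` to `u` in more than one
step, closing it with the edge `ua` gives a cycle through all neighbours of `a` in `S`, and since
that cycle has no chord, they are all among the two cycle-neighbours of `a`: the second vertex of
`p` and `u`.
-/

open SimpleGraph

def Chordless {V : Type*} (G : SimpleGraph V) : Prop :=
  ∀ (u : V) (w : G.Walk u u), w.IsCycle →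
    ∀ a ∈ w.support, ∀ b ∈ w.support, G.Adj a b → w.toSubgraph.Adj a b

namespace SimpleGraph

variable {V : Type*} {G : SimpleGraph V}

namespace Walk

theorem IsPath.length_lt_card {u v : V} {p : G.Walk u v} (hp : p.IsPath) {S : Finset V}
    (hpS : ∀ z ∈ p.support, z ∈ S) : p.length < S.card := by
  classical
  calc p.length < p.support.length := by rw [length_support]; omega
    _ = p.support.toFinset.card := (List.toFinset_card_of_nodup hp.support_nodup).symm
    _ ≤ S.card := Finset.card_le_card fun z hz => hpS z (List.mem_toFinset.mp hz)

theorem IsPath.eq_start_or_eq_end_of_snd_eq {a u w : V} {q : G.Walk a u} (hq : q.IsPath)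
    (hne : a ≠ u) (hsnd : q.snd = u) (hw : w ∈ q.support) : w = a ∨ w = u := by
  have hlen : q.length = 1 := by
    have hpos : 0 < q.length := not_nil_iff_lt_length.mp (not_nil_of_ne hne)
    exact (hq.getVert_injOn (Set.mem_ofPred.mpr (by omega)) (Set.mem_ofPred.mpr le_rfl)
      (by simpa [snd] using hsnd)).symm
  obtain ⟨i, rfl, hi⟩ := mem_support_iff_exists_getVert.mp hw
  obtain rfl | rfl : i = 0 ∨ i = 1 := by omega
  · exact .inl (getVert_zero q)
  · exact .inr hsnd

variable [DecidableEq V]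

theorem mem_support_takeUntil_iff {u v x t : V} (p : G.Walk u v) (hx : x ∈ p.support) :
    t ∈ (p.takeUntil x hx).support ↔ p.support.idxOf t ≤ p.support.idxOf x := by
  rw [(p.support_takeUntil_prefix_support hx).mem_iff_idxOf_lt_length, length_support,
    length_takeUntil, Nat.lt_succ_iff]

theorem exists_mem_forall_mem_support_takeUntil {u v : V} (p : G.Walk u v) (s : Finset V)
    (hs : s.Nonempty) (hsp : ∀ t ∈ s, t ∈ p.support) :
    ∃ x ∈ s, ∃ hx : x ∈ p.support, ∀ t ∈ s, t ∈ (p.takeUntil x hx).support := by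
  obtain ⟨x, hxs, hmax⟩ := s.exists_max_image p.support.idxOf hs
  exact ⟨x, hxs, hsp x hxs, fun t hts => (p.mem_support_takeUntil_iff _).mpr (hmax t hts)⟩

end Walk

variable (G) in
/-- Otherwise every path inside `S` could be extended at its start, giving arbitrarily long ones. -/
theorem exists_isPath_forall_adj_start_mem_support (S : Finset V) (hS : S.Nonempty) :
    ∃ (a b : V) (p : G.Walk a b), p.IsPath ∧ (∀ z ∈ p.support, z ∈ S) ∧
      ∀ v ∈ S, G.Adj a v → v ∈ p.support := by
  by_contra! hext
  have hlong : ∀ n : ℕ, ∃ (a b : V) (p : G.Walk a b), p.IsPath ∧ (∀ z ∈ p.support, z ∈ S) ∧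
      p.length = n := by
    intro n
    induction n with
    | zero =>
      obtain ⟨v, hv⟩ := hS
      exact ⟨v, v, .nil, .nil, by simpa using hv, rfl⟩
    | succ n ih =>
      obtain ⟨a, b, p, hp, hpS, rfl⟩ := ih
      obtain ⟨v, hvS, hav, hvp⟩ := hext a b p hp hpS
      refine ⟨v, b, .cons hav.symm p, hp.cons hvp, ?_, rfl⟩
      simpa [Walk.support_cons, hvS] using hpS
  obtain ⟨a, b, p, hp, hpS, hlen⟩ := hlong S.card
  exact (hp.length_lt_card hpS).ne hlen

theorem Chordless.isChordless {u : V} {c : G.Walk u u} (hG : Chordless G) (hc : c.IsCycle) :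
    c.IsChordless :=
  Walk.isChordless_iff_forall_mem_edges.mpr fun _ _ ha hb hab =>
    c.mem_edges_toSubgraph.mp (Subgraph.mem_edgeSet.mpr (hG u c hc _ ha _ hb hab))

theorem Chordless.eq_snd_or_eq_of_isPath (hG : Chordless G) {a u w : V} {q : G.Walk a u}
    (hq : q.IsPath) (hau : G.Adj a u) (hw : w ∈ q.support) (haw : G.Adj a w) :
    w = q.snd ∨ w = u := by
  by_cases hedge : s(a, u) ∈ q.edges
  · exact .inr <| (hq.eq_start_or_eq_end_of_snd_eq hau.ne (hq.eq_snd_of_mem_edges hedge).symm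
      hw).resolve_left haw.ne.symm
  have hc : (Walk.cons hau q.reverse).IsCycle :=
    (Walk.cons_isCycle_iff _ _).mpr ⟨hq.reverse, by simpa using hedge⟩
  have hwc : w ∈ (Walk.cons hau q.reverse).support := by simp [hw]
  have hchord := (hG.isChordless hc).mem_edges (Walk.start_mem_support _) hwc haw
  rw [Walk.edges_cons, List.mem_cons, Walk.edges_reverse, List.mem_reverse] at hchord
  rcases hchord with hwu | hwq
  · exact .inr (Sym2.congr_right.mp hwu)
  · exact .inl (hq.eq_snd_of_mem_edges hwq)

end SimpleGraph

theorem chordless_two_degenerate_general {V : Type*}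
    (G : SimpleGraph V) [DecidableRel G.Adj] (hG : Chordless G) :
    ∀ S : Finset V, S.Nonempty →
      ∃ v ∈ S, (S.filter (fun u => G.Adj v u)).card ≤ 2 := by
  classical
  intro S hS
  obtain ⟨a, b, p, hp, hpS, hnbrs⟩ := exists_isPath_forall_adj_start_mem_support G S hS
  refine ⟨a, hpS a p.start_mem_support, ?_⟩
  set N := S.filter (fun u => G.Adj a u)
  by_contra! hN
  have hNp : ∀ t ∈ N, t ∈ p.support := fun t ht =>
    hnbrs t (Finset.mem_filter.mp ht).1 (Finset.mem_filter.mp ht).2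
  obtain ⟨u, huN, hup, hNq⟩ :=
    p.exists_mem_forall_mem_support_takeUntil N (Finset.card_pos.mp (by omega)) hNp
  have hNsub : N ⊆ {(p.takeUntil u hup).snd, u} := fun w hw => by
    simpa using hG.eq_snd_or_eq_of_isPath (hp.takeUntil hup) (Finset.mem_filter.mp huN).2
      (hNq w hw) (Finset.mem_filter.mp hw).2
  have := (Finset.card_le_card hNsub).trans Finset.card_le_two
  omega

/-- Every chordless graph is 2-degenerate: every nonempty (induced) subgraph has a
vertex of degree at most 2. -/
theorem chordless_two_degenerate {V : Type*} [Fintype V] [DecidableEq V]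
    (G : SimpleGraph V) [DecidableRel G.Adj] (hG : Chordless G) :
    ∀ S : Finset V, S.Nonempty →
      ∃ v ∈ S, (S.filter (fun u => G.Adj v u)).card ≤ 2 :=
  chordless_two_degenerate_general G hG
end

section
/- Let G be a minimally 2-connected graph (i.e., 2-connected and chordless). Then for every vertex x of G there exist vertices u, v, w of G such that v and w are both neighbours of u, both v and w have degree exactly 2 in G, and x is neither v nor w. -/
/-- `G` is 2-connected: it has at least 3 vertices and remains connected after
deleting any single vertex. -/
def TwoConnected {V : Type*} [Fintype V] (G : SimpleGraph V) : Prop :=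
  3 ≤ Fintype.card V ∧ ∀ v : V, (G.induce {u : V | u ≠ v}).Connected

/-!
Delete every vertex of degree 2 other than `x`. If no vertex had two neighbours of degree 2 other
than `x`, every vertex would lose at most one neighbour, so a cycle would survive all of whose
vertices except possibly `x` have degree at least 3 in `G`.

That is impossible in a 2-connected chordless graph. Suppose every vertex of a cycle
`Z = z₀ z₁ … zₙ₋₁` except `z₀` has degree at least 3. Being chordless, each `zᵢ` with `i > 0` has a
neighbour off `Z`, and as `G - zᵢ` is connected, its component in `G - Z` is attached to `Z` at
some other `zⱼ` too. No component is attached at consecutive `zᵢ, zᵢ₊₁`: a path through it and the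
long way round `Z` would form a cycle with chord `zᵢzᵢ₊₁`. Let `m` be least such that a component
`K` is attached at `zₘ` and at some `z_c` with `c < m`, and let `a = m - 1`. By minimality of `m`
and the previous remark, `0 < a`, `c < a`, and a component `K' ≠ K` attached at `zₐ` is attached
also at some `z_b` with `b > a + 1`. Going from `zₐ₊₁` through `K` to `z_c`, along `Z` to `zₐ`,
through `K'` to `z_b` and back along `Z` to `zₐ₊₁` gives a cycle with chord `zₐzₐ₊₁`.
-/

namespace SimpleGraph

variable {V : Type*} {G : SimpleGraph V}

namespace Walk

lemma IsPath.start_notMem_support_tail {u v : V} {p : G.Walk u v} (hp : p.IsPath) :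
    u ∉ p.support.tail :=
  (List.nodup_cons.mp (p.cons_tail_support ▸ hp.support_nodup)).1

lemma IsPath.append_of_inter {u v w : V} {p : G.Walk u v} {q : G.Walk v w}
    (hp : p.IsPath) (hq : q.IsPath) (h : ∀ t ∈ p.support, t ∈ q.support → t = v) :
    (p.append q).IsPath := by
  rw [isPath_def, support_append]
  refine hp.support_nodup.append hq.support_nodup.tail fun t htp htq => ?_
  obtain rfl := h t htp (List.mem_of_mem_tail htq)
  exact hq.start_notMem_support_tail htq

lemma IsPath.isCycle_append_of_inter {u v : V} {p : G.Walk u v} {q : G.Walk v u}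
    (hp : p.IsPath) (hq : q.IsPath) (h : ∀ t ∈ p.support, t ∈ q.support → t = u ∨ t = v)
    (hn : 1 < p.length ∨ 1 < q.length) : (p.append q).IsCycle := by
  refine hp.isCycle_append hq (fun t htp htq => ?_) hn
  rcases h t (List.mem_of_mem_tail htp) (List.mem_of_mem_tail htq) with rfl | rfl
  · exact hp.start_notMem_support_tail htp
  · exact hq.start_notMem_support_tail htq

end Walk

open Walk

section

variable [Fintype V] [DecidableRel G.Adj]

lemma IsAcyclic.degree_le_one_of_forall_length_le (hG : G.IsAcyclic) {u v : V}
    {p : G.Walk u v} (hp : p.IsPath)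
    (hmax : ∀ (u' v' : V) (p' : G.Walk u' v'), p'.IsPath → p'.length ≤ p.length) :
    G.degree u ≤ 1 := by
  rw [← card_neighborFinset_eq_degree, Finset.card_le_one]
  suffices ∀ w, G.Adj u w → w = p.snd by
    intro w hw w' hw'
    rw [this w ((mem_neighborFinset _ _ _).mp hw), this w' ((mem_neighborFinset _ _ _).mp hw')]
  intro w hw
  refine hG.eq_snd_of_adj_start hp hw (by_contra fun hwp => ?_)
  have := hmax _ _ _ (hp.cons hwp (h := hw.symm))
  simp at this

theorem not_isAcyclic_of_two_le_degree {x a b : V} (hab : G.Adj a b)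
    (hdeg : ∀ v, v ≠ x → 2 ≤ G.degree v) : ¬ G.IsAcyclic := by
  intro hG
  have : Nonempty V := ⟨a⟩
  obtain ⟨u, v, p, hp, hmax⟩ := Walk.exists_isPath_forall_isPath_length_le_length G
  have hlen := hmax a b hab.toWalk (by simp [hab.ne])
  have huv : u ≠ v := fun h => by
    have := (hp.nil_iff_eq.mpr h).length_eq_zero
    simp only [length_cons, length_nil, zero_add] at hlen
    omega
  have hu := hG.degree_le_one_of_forall_length_le hp hmax
  have hv := hG.degree_le_one_of_forall_length_le hp.reverse (by simpa using hmax)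
  rcases eq_or_ne u x with rfl | hux
  · have := hdeg v (Ne.symm huv); omega
  · have := hdeg u hux; omega

lemma degree_le_degree_induce_add_one {s : Set V} [DecidablePred (· ∈ s)] {v : V} (hv : v ∈ s)
    (h : ∀ w w', G.Adj v w → G.Adj v w' → w ∉ s → w' ∉ s → w = w') :
    G.degree v ≤ (G.induce s).degree ⟨v, hv⟩ + 1 := by
  classical
  rw [← card_neighborFinset_eq_degree, ← card_neighborFinset_eq_degree,
    ← Finset.card_map (Function.Embedding.subtype _), map_neighborFinset_induce,
    ← Finset.card_inter_add_card_sdiff (G.neighborFinset v) s.toFinset]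
  gcongr
  rw [Finset.card_le_one]
  intro w hw w' hw'
  simp only [Finset.mem_sdiff, mem_neighborFinset, Set.mem_toFinset] at hw hw'
  exact h w w' hw.1 hw'.1 hw.2 hw'.2

theorem exists_isCycle_support_subset {S : Set V} {x : V} (hx : x ∈ S)
    (hS : ∀ u w w', G.Adj u w → G.Adj u w' → w ∉ S → w' ∉ S → w = w')
    (hxdeg : 2 ≤ G.degree x) (hdeg : ∀ v ∈ S, v ≠ x → 2 < G.degree v) :
    ∃ (c : V) (Z : G.Walk c c), Z.IsCycle ∧ ∀ v ∈ Z.support, v ∈ S := by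
  classical
  let H := G.induce S
  have hdegH (v : V) (hv : v ∈ S) : G.degree v ≤ H.degree ⟨v, hv⟩ + 1 :=
    degree_le_degree_induce_add_one hv (hS v)
  obtain ⟨y, hxy⟩ : ∃ y, H.Adj ⟨x, hx⟩ y := by
    rw [← degree_pos_iff_exists_adj]
    have := hdegH x hx
    omega
  have hH : ¬ H.IsAcyclic := not_isAcyclic_of_two_le_degree (x := ⟨x, hx⟩) hxy fun ⟨v, hv⟩ hvx => by
    have := hdeg v hv fun h => hvx (Subtype.ext h)
    have := hdegH v hv
    omega
  obtain ⟨w, Z, hZ⟩ : ∃ (w : S) (Z : H.Walk w w), Z.IsCycle := by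
    simpa [IsAcyclic] using hH
  refine ⟨w, Z.map (Embedding.induce S).toHom,
    hZ.map (f := (Embedding.induce S).toHom) (Embedding.induce (G := G) S).injective,
    fun v hv => ?_⟩
  obtain ⟨⟨v, hvS⟩, -, rfl⟩ := List.mem_map.mp (Z.support_map _ ▸ hv)
  exact hvS

end

namespace Walk

lemma IsCycle.getVert_inj {c : V} {Z : G.Walk c c} (hZ : Z.IsCycle) {k l : ℕ}
    (hk : k < Z.length) (hl : l < Z.length) (h : Z.getVert k = Z.getVert l) : k = l :=
  hZ.getVert_injOn' (by simp only [Set.mem_ofPred_eq]; omega)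
    (by simp only [Set.mem_ofPred_eq]; omega) h

lemma IsCycle.exists_getVert_eq {c t : V} {Z : G.Walk c c} (hZ : Z.IsCycle)
    (ht : t ∈ Z.support) : ∃ k < Z.length, Z.getVert k = t := by
  obtain ⟨k, rfl, hk⟩ := mem_support_iff_exists_getVert.mp ht
  rcases hk.lt_or_eq with hk | rfl
  · exact ⟨k, hk, rfl⟩
  · exact ⟨0, hZ.three_le_length.trans_lt' (by omega), by simp⟩

def segment {u v : V} (p : G.Walk u v) {i j : ℕ} (hij : i ≤ j) :
    G.Walk (p.getVert i) (p.getVert j) :=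
  ((p.drop i).take (j - i)).copy rfl (by rw [drop_getVert, Nat.add_sub_cancel' hij])

lemma length_segment {u v : V} (p : G.Walk u v) {i j : ℕ} (hij : i ≤ j) (hj : j ≤ p.length) :
    (p.segment hij).length = j - i := by
  simp only [segment, length_copy, take_length, drop_length]
  omega

lemma getVert_segment {u v : V} (p : G.Walk u v) {i j : ℕ} (hij : i ≤ j) (k : ℕ) :
    (p.segment hij).getVert k = p.getVert (i + min (j - i) k) := by
  simp [segment]

lemma exists_getVert_eq_of_mem_support_segment {u v t : V} (p : G.Walk u v) {i j : ℕ}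
    (hij : i ≤ j) (ht : t ∈ (p.segment hij).support) :
    ∃ k, i ≤ k ∧ k ≤ j ∧ p.getVert k = t := by
  obtain ⟨k, rfl, -⟩ := mem_support_iff_exists_getVert.mp ht
  exact ⟨i + min (j - i) k, by omega, by omega, (p.getVert_segment hij k).symm⟩

lemma IsCycle.isPath_segment {c : V} {Z : G.Walk c c} (hZ : Z.IsCycle) {i j : ℕ} (hij : i ≤ j)
    (hj : j ≤ Z.length) (h : 0 < i ∨ j < Z.length) : (Z.segment hij).IsPath := by
  rw [← IsPath.getVert_injOn_iff]
  intro k hk l hl hkl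
  simp only [Set.mem_ofPred_eq, Z.length_segment hij hj] at hk hl
  simp only [getVert_segment] at hkl
  rcases h with h | h
  · have := hZ.getVert_injOn (by simp only [Set.mem_ofPred_eq]; omega)
      (by simp only [Set.mem_ofPred_eq]; omega) hkl
    omega
  · have := hZ.getVert_inj (by omega) (by omega) hkl
    omega

end Walk

def ReachableAvoiding (G : SimpleGraph V) (S : Set V) (u v : V) : Prop :=
  ∃ p : G.Walk u v, ∀ t ∈ p.support, t ∉ S

namespace ReachableAvoiding

variable {S : Set V} {u v w : V}

lemma refl (hu : u ∉ S) : G.ReachableAvoiding S u u :=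
  ⟨nil, by simpa using hu⟩

lemma of_adj (h : G.Adj u v) (hu : u ∉ S) (hv : v ∉ S) : G.ReachableAvoiding S u v :=
  ⟨h.toWalk, by simp [hu, hv]⟩

lemma of_mem_support (p : G.Walk u v) (hp : ∀ t ∈ p.support, t ∉ S) (hw : w ∈ p.support) :
    G.ReachableAvoiding S u w := by
  classical
  exact ⟨p.takeUntil w hw, fun t ht => hp t (p.support_takeUntil_subset_support hw ht)⟩

lemma symm (h : G.ReachableAvoiding S u v) : G.ReachableAvoiding S v u := by
  obtain ⟨p, hp⟩ := h
  exact ⟨p.reverse, fun t ht => hp t (by simpa using ht)⟩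

lemma trans (h₁ : G.ReachableAvoiding S u v) (h₂ : G.ReachableAvoiding S v w) :
    G.ReachableAvoiding S u w := by
  obtain ⟨p, hp⟩ := h₁
  obtain ⟨q, hq⟩ := h₂
  exact ⟨p.append q, fun t ht => ((mem_support_append_iff p q).mp ht).elim (hp t) (hq t)⟩

lemma notMem_left (h : G.ReachableAvoiding S u v) : u ∉ S :=
  h.elim fun p hp => hp u p.start_mem_support

end ReachableAvoiding

lemma Walk.exists_reachableAvoiding_adj {S : Set V} {u w : V} (p : G.Walk u w) (hu : u ∉ S)
    (hw : w ∈ S) : ∃ s ∈ p.support, s ∈ S ∧ ∃ m, G.ReachableAvoiding S u m ∧ G.Adj m s := by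
  induction p with
  | nil => exact absurd hw hu
  | @cons a b _ h q ih =>
    by_cases hb : b ∈ S
    · exact ⟨b, by simp, hb, a, .refl hu, h⟩
    · obtain ⟨s, hs, hsS, m, hm, hadj⟩ := ih hb hw
      exact ⟨s, by simp [hs], hsS, m, (ReachableAvoiding.of_adj h hu hb).trans hm, hadj⟩

namespace Walk

variable {c : V}

/-- The component of `u` in `G - Z` has a neighbour at the `i`-th vertex of the cycle `Z`.
Requiring `i < Z.length` gives the base vertex the single index `0`. -/
def AttachesAt (Z : G.Walk c c) (u : V) (i : ℕ) : Prop :=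
  i < Z.length ∧ ∃ t, G.ReachableAvoiding {t | t ∈ Z.support} u t ∧ G.Adj t (Z.getVert i)

lemma AttachesAt.of_reachableAvoiding {Z : G.Walk c c} {u w : V} {i : ℕ}
    (h : G.ReachableAvoiding {t | t ∈ Z.support} u w) (hw : Z.AttachesAt w i) :
    Z.AttachesAt u i :=
  ⟨hw.1, hw.2.imp fun _ ht => ⟨h.trans ht.1, ht.2⟩⟩

lemma IsCycle.exists_isPath_of_attachesAt {Z : G.Walk c c} (hZ : Z.IsCycle) {u : V} {i j : ℕ}
    (hi : Z.AttachesAt u i) (hj : Z.AttachesAt u j) (hij : i ≠ j) :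
    ∃ π : G.Walk (Z.getVert i) (Z.getVert j), π.IsPath ∧ 1 < π.length ∧
      ∀ t ∈ π.support, t = Z.getVert i ∨ t = Z.getVert j ∨
        (t ∉ Z.support ∧ G.ReachableAvoiding {t | t ∈ Z.support} u t) := by
  classical
  obtain ⟨hi, t₁, hut₁, hadj₁⟩ := hi
  obtain ⟨hj, t₂, hut₂, hadj₂⟩ := hj
  obtain ⟨τ₀, hτ₀⟩ := hut₁.symm.trans hut₂
  have hτ : ∀ t ∈ τ₀.bypass.support, t ∉ Z.support := fun t ht =>
    hτ₀ t (τ₀.support_bypass_subset_support ht)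
  have hfi : Z.getVert i ∉ τ₀.bypass.support := fun h => hτ _ h (Z.getVert_mem_support i)
  have hfj : Z.getVert j ∉ τ₀.bypass.support := fun h => hτ _ h (Z.getVert_mem_support j)
  refine ⟨.cons hadj₁.symm (τ₀.bypass.concat hadj₂), ?_, by simp, fun t ht => ?_⟩
  · refine (τ₀.bypass_isPath.concat hfj hadj₂).cons ?_
    rw [support_concat, List.mem_append, List.mem_singleton, not_or]
    exact ⟨hfi, fun h => hij (hZ.getVert_inj hi hj h)⟩
  · rw [support_cons, support_concat, List.mem_cons, List.mem_append,
      List.mem_singleton] at ht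
    rcases ht with rfl | ht | rfl
    · exact .inl rfl
    · exact .inr (.inr ⟨hτ t ht, hut₁.trans (.of_mem_support τ₀ hτ₀
        (τ₀.support_bypass_subset_support ht))⟩)
    · exact .inr (.inl rfl)

lemma IsCycle.exists_isPath_attachesAt_append {Z : G.Walk c c} (hZ : Z.IsCycle) {u : V}
    {i j k lo hi : ℕ} (hui : Z.AttachesAt u i) (huj : Z.AttachesAt u j)
    {σ : G.Walk (Z.getVert j) (Z.getVert k)} (hσ : σ.IsPath)
    (hσsupp : ∀ t ∈ σ.support, ∃ l, lo ≤ l ∧ l ≤ hi ∧ Z.getVert l = t)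
    (hj : lo ≤ j ∧ j ≤ hi) (hhi : hi < Z.length) (hilo : i < lo ∨ hi < i) :
    ∃ P : G.Walk (Z.getVert i) (Z.getVert k), P.IsPath ∧ 1 < P.length ∧
      ∀ t ∈ P.support, (∃ l, (l = i ∨ lo ≤ l ∧ l ≤ hi) ∧ Z.getVert l = t) ∨
        (t ∉ Z.support ∧ G.ReachableAvoiding {t | t ∈ Z.support} u t) := by
  obtain ⟨π, hπ, hπlen, hπsupp⟩ := hZ.exists_isPath_of_attachesAt hui huj (by omega)
  have hin := hui.1
  refine ⟨π.append σ, hπ.append_of_inter hσ fun t ht ht' => ?_,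
    by simp only [length_append]; omega, fun t ht => ?_⟩
  · obtain ⟨l, hl, hl', rfl⟩ := hσsupp t ht'
    rcases hπsupp _ ht with h | h | h
    · exact absurd (hZ.getVert_inj (by omega) hin h) (by omega)
    · exact h
    · exact absurd (Z.getVert_mem_support l) h.1
  · rcases (mem_support_append_iff _ _).mp ht with ht | ht
    · rcases hπsupp t ht with rfl | rfl | h
      · exact .inl ⟨i, .inl rfl, rfl⟩
      · exact .inl ⟨j, .inr hj, rfl⟩
      · exact .inr h
    · obtain ⟨l, hl, hl', hlt⟩ := hσsupp t ht
      exact .inl ⟨l, .inr ⟨hl, hl'⟩, hlt⟩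

end Walk

end SimpleGraph

open SimpleGraph Walk

namespace Chordless

variable {V : Type*} {G : SimpleGraph V}

/-- Otherwise the two paths form a cycle with the edge `uv` as a chord. -/
theorem length_eq_one_of_adj (hch : Chordless G) {u v : V} {p : G.Walk u v} {q : G.Walk v u}
    (hp : p.IsPath) (hq : q.IsPath) (h : ∀ t ∈ p.support, t ∈ q.support → t = u ∨ t = v)
    (huv : G.Adj u v) : p.length = 1 ∨ q.length = 1 := by
  by_contra! hlen
  have hp0 : p.length ≠ 0 := fun h0 => huv.ne (eq_of_length_eq_zero h0)
  have hcyc := hp.isCycle_append_of_inter hq h (.inl (by omega))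
  have hchord := hch u _ hcyc u (p.append q).start_mem_support v
    ((mem_support_append_iff p q).mpr (.inl p.end_mem_support)) huv
  rw [adj_toSubgraph_iff_mem_edges, edges_append, List.mem_append] at hchord
  rcases hchord with hmem | hmem
  · exact hlen.1 (hp.length_eq_one_of_mem_edges hmem)
  · exact hlen.2 (hq.length_eq_one_of_mem_edges (Sym2.eq_swap ▸ hmem))

theorem exists_adj_notMem_support [Fintype V] [DecidableRel G.Adj] (hch : Chordless G)
    {c v : V} {Z : G.Walk c c} (hZ : Z.IsCycle) (hv : v ∈ Z.support) (hdeg : 2 < G.degree v) :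
    ∃ w, G.Adj v w ∧ w ∉ Z.support := by
  by_contra! hon
  have hsub : G.neighborSet v ⊆ Z.toSubgraph.neighborSet v :=
    fun w hw => hch c Z hZ v hv w (hon w hw) hw
  have := Set.ncard_le_ncard hsub Z.finite_neighborSet_toSubgraph
  rw [hZ.ncard_neighborSet_toSubgraph_eq_two hv, Set.ncard_eq_toFinset_card',
    ← neighborFinset_def, card_neighborFinset_eq_degree] at this
  omega

variable {c : V} {Z : G.Walk c c}

theorem not_attachesAt_succ (hch : Chordless G) (hZ : Z.IsCycle) {u : V} {i : ℕ}
    (hi : Z.AttachesAt u i) (hi' : Z.AttachesAt u (i + 1)) : False := by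
  obtain ⟨π, hπ, hπlen, hπsupp⟩ := hZ.exists_isPath_of_attachesAt hi hi' (by omega)
  have hn := hZ.three_le_length
  have hi'n := hi'.1
  -- the long way round `Z` from `zᵢ₊₁` to `zᵢ`
  let ρ : G.Walk (Z.getVert (i + 1)) (Z.getVert i) :=
    ((Z.segment (j := Z.length) (by omega)).copy rfl Z.getVert_length).append
      ((Z.segment (i := 0) (Nat.zero_le i)).copy Z.getVert_zero rfl)
  have hρ : ρ.IsPath := by
    refine IsPath.append_of_inter
      ((isPath_copy _ _ _).mpr (hZ.isPath_segment _ le_rfl (.inl (by omega))))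
      ((isPath_copy _ _ _).mpr (hZ.isPath_segment _ (by omega) (.inr hi.1)))
      fun t ht ht' => ?_
    rw [support_copy] at ht ht'
    obtain ⟨k, hk, hkn, rfl⟩ := Z.exists_getVert_eq_of_mem_support_segment _ ht
    obtain ⟨l, -, hli, hl⟩ := Z.exists_getVert_eq_of_mem_support_segment _ ht'
    rcases hkn.lt_or_eq with hkn | rfl
    · exact absurd (hZ.getVert_inj (by omega) hkn hl) (by omega)
    · exact Z.getVert_length
  have hρsupp : ∀ t ∈ ρ.support, t ∈ Z.support := by
    intro t ht
    rw [mem_support_append_iff, support_copy, support_copy] at ht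
    rcases ht with ht | ht <;>
    · obtain ⟨k, -, -, rfl⟩ := Z.exists_getVert_eq_of_mem_support_segment _ ht
      exact Z.getVert_mem_support k
  have hρlen : ρ.length = Z.length - 1 := by
    simp only [ρ, length_append, length_copy, length_segment _ _ le_rfl,
      length_segment _ _ (by omega : i ≤ Z.length)]
    omega
  have hinter : ∀ t ∈ π.support, t ∈ ρ.support → t = Z.getVert i ∨ t = Z.getVert (i + 1) :=
    fun t ht ht' => (hπsupp t ht).imp_right (·.resolve_right fun h => h.1 (hρsupp t ht'))
  have := hch.length_eq_one_of_adj hπ hρ hinter (Z.adj_getVert_succ hi.1)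
  omega

theorem not_attachesAt_interleaved (hch : Chordless G) (hZ : Z.IsCycle) {u w : V} {a b c' : ℕ}
    (hca : c' < a) (hab : a + 1 < b) (hua : Z.AttachesAt u a) (hub : Z.AttachesAt u b)
    (hwa : Z.AttachesAt w (a + 1)) (hwc : Z.AttachesAt w c') : False := by
  have hbn := hub.1
  have hsep : ¬ G.ReachableAvoiding {t | t ∈ Z.support} u w := fun h =>
    hch.not_attachesAt_succ hZ hua (hwa.of_reachableAvoiding h)
  obtain ⟨P, hP, hPlen, hPsupp⟩ := hZ.exists_isPath_attachesAt_append hwa hwc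
    (hZ.isPath_segment hca.le (by omega) (.inr (by omega)))
    (fun t => Z.exists_getVert_eq_of_mem_support_segment _) ⟨le_rfl, hca.le⟩ (by omega)
    (.inr (by omega))
  obtain ⟨Q, hQ, hQlen, hQsupp⟩ := hZ.exists_isPath_attachesAt_append hua hub
    (hZ.isPath_segment (by omega : a + 1 ≤ b) (by omega) (.inr hbn)).reverse
    (fun t ht => Z.exists_getVert_eq_of_mem_support_segment _ (by simpa using ht))
    ⟨by omega, le_rfl⟩ hbn (.inl (by omega))
  have hinter : ∀ t ∈ P.support, t ∈ Q.support → t = Z.getVert (a + 1) ∨ t = Z.getVert a := by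
    intro t ht ht'
    rcases hPsupp t ht with ⟨k, hk, rfl⟩ | ⟨hoff, hwt⟩ <;>
      rcases hQsupp _ ht' with ⟨l, hl, hlk⟩ | ⟨hoff', hut⟩
    · obtain rfl := hZ.getVert_inj (by omega) (by omega) hlk
      obtain rfl | rfl : l = a + 1 ∨ l = a := by omega
      exacts [.inl rfl, .inr rfl]
    · exact absurd (Z.getVert_mem_support k) hoff'
    · exact absurd (hlk ▸ Z.getVert_mem_support l) hoff
    · exact absurd (hut.trans hwt.symm) hsep
  have := hch.length_eq_one_of_adj hP hQ hinter (Z.adj_getVert_succ (by omega)).symm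
  omega

end Chordless

lemma exists_ne_ne_of_three_le_card {α : Type*} [Fintype α] (h : 3 ≤ Fintype.card α) (a b : α) :
    ∃ w, w ≠ a ∧ w ≠ b := by
  classical
  obtain ⟨w, -, hw⟩ := Finset.exists_mem_notMem_of_card_lt_card (s := {a, b})
    (t := Finset.univ) (Finset.card_le_two.trans_lt (by rw [Finset.card_univ]; omega))
  simp only [Finset.mem_insert, Finset.mem_singleton, not_or] at hw
  exact ⟨w, hw⟩

namespace TwoConnected

variable {V : Type*} [Fintype V] {G : SimpleGraph V}

lemma exists_walk_avoiding (h2 : TwoConnected G) {a b v : V} (ha : a ≠ v) (hb : b ≠ v) :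
    ∃ p : G.Walk a b, v ∉ p.support := by
  obtain ⟨p⟩ := (h2.2 v).preconnected ⟨a, ha⟩ ⟨b, hb⟩
  refine ⟨p.map (Embedding.induce _).toHom, fun hv => ?_⟩
  obtain ⟨t, -, ht⟩ := List.mem_map.mp (p.support_map (Embedding.induce _).toHom ▸ hv)
  exact t.2 ht

lemma preconnected (h2 : TwoConnected G) : G.Preconnected := fun a b => by
  obtain ⟨v, hva, hvb⟩ := exists_ne_ne_of_three_le_card h2.1 a b
  obtain ⟨p, -⟩ := h2.exists_walk_avoiding hva.symm hvb.symm
  exact ⟨p⟩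

lemma two_le_degree [DecidableRel G.Adj] (h2 : TwoConnected G) (v : V) : 2 ≤ G.degree v := by
  obtain ⟨a, hav, -⟩ := exists_ne_ne_of_three_le_card h2.1 v v
  obtain ⟨p⟩ := h2.preconnected v a
  have hp : ¬ p.Nil := fun hnil => hav hnil.eq.symm
  obtain ⟨b, hbv, hby⟩ := exists_ne_ne_of_three_le_card h2.1 v p.snd
  obtain ⟨q, hq⟩ := h2.exists_walk_avoiding (p.adj_snd hp).ne hby
  have hq' : ¬ q.Nil := fun hnil => hbv hnil.eq.symm
  rw [← card_neighborFinset_eq_degree]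
  refine Finset.one_lt_card_iff.mpr ⟨p.snd, q.snd, ?_, ?_, ?_⟩
  · exact (mem_neighborFinset _ _ _).mpr (p.adj_snd hp)
  · exact (mem_neighborFinset _ _ _).mpr (q.adj_snd hq')
  · exact fun h => hq (h ▸ q.getVert_mem_support 1)

variable {c : V} {Z : G.Walk c c}

lemma exists_attachesAt_ne (h2 : TwoConnected G) (hZ : Z.IsCycle) {u : V} {i : ℕ}
    (hi : Z.AttachesAt u i) : ∃ j ≠ i, Z.AttachesAt u j := by
  obtain ⟨hin, t, hut, -⟩ := hi
  have hu : u ≠ Z.getVert i := fun h => hut.notMem_left (h ▸ Z.getVert_mem_support i)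
  obtain ⟨p, hp⟩ := h2.exists_walk_avoiding hu (Z.adj_getVert_succ hin).ne.symm
  obtain ⟨s, hsp, hsZ, m, hum, hms⟩ :=
    p.exists_reachableAvoiding_adj hut.notMem_left (Z.getVert_mem_support (i + 1))
  obtain ⟨j, hj, rfl⟩ := hZ.exists_getVert_eq hsZ
  exact ⟨j, fun h => hp (h ▸ hsp), hj, m, hum, hms⟩

lemma exists_attachesAt_pair [DecidableRel G.Adj] (h2 : TwoConnected G) (hch : Chordless G)
    (hZ : Z.IsCycle) {i : ℕ} (hi : i < Z.length) (hdeg : 2 < G.degree (Z.getVert i)) :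
    ∃ u, Z.AttachesAt u i ∧ ∃ j ≠ i, Z.AttachesAt u j := by
  obtain ⟨w, hadj, hw⟩ := hch.exists_adj_notMem_support hZ (Z.getVert_mem_support i) hdeg
  have hwi : Z.AttachesAt w i := ⟨hi, w, .refl hw, hadj.symm⟩
  exact ⟨w, hwi, h2.exists_attachesAt_ne hZ hwi⟩

theorem exists_degree_le_two_of_isCycle [DecidableRel G.Adj] (h2 : TwoConnected G)
    (hch : Chordless G) (hZ : Z.IsCycle) : ∃ v ∈ Z.support, v ≠ c ∧ G.degree v ≤ 2 := by
  classical
  by_contra! hdeg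
  have hpair : ∀ i, 0 < i → i < Z.length → ∃ u, Z.AttachesAt u i ∧ ∃ j ≠ i, Z.AttachesAt u j :=
    fun i h0 hi => h2.exists_attachesAt_pair hch hZ hi (hdeg _ (Z.getVert_mem_support i)
      fun h => by have := hZ.getVert_inj hi (by omega) (h.trans Z.getVert_zero.symm); omega)
  have hex : ∃ m, ∃ u c', c' < m ∧ Z.AttachesAt u m ∧ Z.AttachesAt u c' := by
    have hn := hZ.three_le_length
    obtain ⟨u, hu, j, hj, hu'⟩ := hpair (Z.length - 1) (by omega) (by omega)
    exact ⟨Z.length - 1, u, j, by have := hu'.1; omega, hu, hu'⟩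
  obtain ⟨w, c', hc', hwm, hwc⟩ := Nat.find_spec hex
  obtain ⟨a, ha⟩ : ∃ a, Nat.find hex = a + 1 := Nat.exists_eq_add_one.mpr (by omega)
  rw [ha] at hc' hwm
  have ha0 : 0 < a := by
    by_contra! h
    obtain rfl : a = 0 := by omega
    obtain rfl : c' = 0 := by omega
    exact hch.not_attachesAt_succ hZ hwc hwm
  obtain ⟨u, hua, b, hba, hub⟩ := hpair a ha0 (by have := hwm.1; omega)
  have hab : a < b := by
    by_contra! h
    exact Nat.find_min hex (by omega : a < Nat.find hex) ⟨u, b, by omega, hua, hub⟩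
  have hb : b ≠ a + 1 := fun h => hch.not_attachesAt_succ hZ hua (h ▸ hub)
  have hc : c' ≠ a := fun h => hch.not_attachesAt_succ hZ (h ▸ hwc) hwm
  exact hch.not_attachesAt_interleaved hZ (by omega) (by omega) hua hub hwm hwc

theorem exists_degree_eq_two_of_isCycle [DecidableRel G.Adj] (h2 : TwoConnected G)
    (hch : Chordless G) (hZ : Z.IsCycle) (x : V) :
    ∃ v ∈ Z.support, v ≠ x ∧ G.degree v = 2 := by
  classical
  by_cases hx : x ∈ Z.support
  · obtain ⟨v, hv, hvx, hdeg⟩ := h2.exists_degree_le_two_of_isCycle hch (hZ.rotate hx)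
    exact ⟨v, (mem_support_rotate_iff _ _ _).mp hv, hvx, hdeg.antisymm (h2.two_le_degree v)⟩
  · obtain ⟨v, hv, -, hdeg⟩ := h2.exists_degree_le_two_of_isCycle hch hZ
    exact ⟨v, hv, fun h => hx (h ▸ hv), hdeg.antisymm (h2.two_le_degree v)⟩

end TwoConnected

/-- In a minimally 2-connected graph (2-connected and chordless), for every vertex
`x` there are vertices `u, v, w` with `v, w` distinct neighbours of `u`, both of
degree exactly 2, and `x ∉ {v, w}`. -/
theorem minimally_two_connected_degree_two_neighbours
    {V : Type*} [Fintype V] (G : SimpleGraph V) [DecidableRel G.Adj]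
    (h2 : TwoConnected G) (hch : Chordless G) (x : V) :
    ∃ u v w : V, v ≠ w ∧ G.Adj u v ∧ G.Adj u w ∧
      G.degree v = 2 ∧ G.degree w = 2 ∧ x ≠ v ∧ x ≠ w := by
  by_contra! hcon
  let S : Set V := {v | v = x ∨ G.degree v ≠ 2}
  have hS : ∀ u w w', G.Adj u w → G.Adj u w' → w ∉ S → w' ∉ S → w = w' := by
    intro u w w' hw hw' hwS hw'S
    simp only [S, Set.mem_ofPred_eq, not_or, not_not] at hwS hw'S
    by_contra hne
    exact hw'S.1 (hcon u w w' hne hw hw' hwS.2 hw'S.2 (Ne.symm hwS.1)).symm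
  obtain ⟨c, Z, hZ, hZS⟩ := exists_isCycle_support_subset (S := S) (.inl rfl) hS
    (h2.two_le_degree x) fun v hv hvx =>
      (h2.two_le_degree v).lt_of_ne' (hv.resolve_left hvx)
  obtain ⟨v, hv, hvx, hdeg⟩ := h2.exists_degree_eq_two_of_isCycle hch hZ x
  exact (hZS v hv).elim hvx (· hdeg)
end

section
/- Let G be a bipartite graph on n vertices and let t be a positive integer. Then for every assignment L of t-element colour lists to the vertices of G, there exists an induced subgraph of G on at least (1 - (1/2)^t)·n vertices that is L-list colourable. -/
/-!
Give each colour a side of the bipartition uniformly at random. A vertex is kept when some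
colour of its list lies on its own side, and is then coloured by such a colour; adjacent kept
vertices lie on different sides, so they get different colours. A vertex is lost only when all
`t` colours of its list land on the other side, which happens with probability `2⁻ᵗ`, so some
choice of sides loses at most `2⁻ᵗ n` vertices.
-/

open Finset

section

variable {α V : Type*}

theorem card_filter_forall_mem_ne_mul_two_pow [Fintype α] [DecidableEq α] (s : Finset α)
    (b : Bool) :
    #{σ : α → Bool | ∀ a ∈ s, σ a ≠ b} * 2 ^ #s = 2 ^ Fintype.card α := by
  have hpi : ({σ : α → Bool | ∀ a ∈ s, σ a ≠ b} : Finset _) =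
      Fintype.piFinset fun a ↦ if a ∈ s then {!b} else univ := by
    ext σ
    simp only [mem_filter, mem_univ, true_and, Fintype.mem_piFinset]
    refine forall_congr' fun a ↦ ?_
    split_ifs with ha <;> simp [ha, Bool.eq_not]
  have hcompl : ({a | a ∉ s} : Finset α) = sᶜ := by
    simp only [filter_not, filter_mem_eq_inter, univ_inter, compl_eq_univ_sdiff]
  rw [hpi, Fintype.card_piFinset, prod_apply_ite]
  simp only [card_singleton, prod_const_one, one_mul, prod_const, card_univ, Fintype.card_bool,
    hcompl, ← pow_add, card_compl_add_card]

theorem exists_card_filter_forall_mem_ne_mul_two_pow_le_of_fintype [Fintype α] [DecidableEq α]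
    [Fintype V] (f : V → Bool) (L : V → Finset α) (t : ℕ) (hL : ∀ v, #(L v) = t) :
    ∃ σ : α → Bool, #{v | ∀ a ∈ L v, σ a ≠ f v} * 2 ^ t ≤ Fintype.card V := by
  suffices ∑ σ : α → Bool, #{v | ∀ a ∈ L v, σ a ≠ f v} * 2 ^ t =
      ∑ _σ : α → Bool, Fintype.card V by
    obtain ⟨σ, -, hσ⟩ := exists_le_of_sum_le univ_nonempty this.le
    exact ⟨σ, hσ⟩
  calc ∑ σ : α → Bool, #{v | ∀ a ∈ L v, σ a ≠ f v} * 2 ^ t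
      = ∑ v : V, #{σ : α → Bool | ∀ a ∈ L v, σ a ≠ f v} * 2 ^ #(L v) := by
        simp only [card_filter, ← sum_mul, hL]
        rw [sum_comm]
    _ = ∑ _σ : α → Bool, Fintype.card V := by
        simp only [card_filter_forall_mem_ne_mul_two_pow, sum_const, card_univ, smul_eq_mul,
          Fintype.card_fun, Fintype.card_bool]
        exact mul_comm _ _

theorem exists_card_filter_forall_mem_ne_mul_two_pow_le [DecidableEq α] [Fintype V]
    (f : V → Bool) (L : V → Finset α) (t : ℕ) (hL : ∀ v, #(L v) = t) :
    ∃ σ : α → Bool, #{v | ∀ a ∈ L v, σ a ≠ f v} * 2 ^ t ≤ Fintype.card V := by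
  set A := univ.biUnion L
  have hLA : ∀ v, L v ⊆ A := fun v ↦ subset_biUnion_of_mem L (mem_univ v)
  obtain ⟨σ, hσ⟩ := exists_card_filter_forall_mem_ne_mul_two_pow_le_of_fintype f
    (fun v ↦ (L v).subtype (· ∈ A)) t fun v ↦ by
      rw [card_subtype, filter_true_of_mem (hLA v), hL]
  refine ⟨fun a ↦ if h : a ∈ A then σ ⟨a, h⟩ else false, le_trans ?_ hσ⟩
  gcongr with v
  intro hv ⟨a, haA⟩ ha
  simpa [haA] using hv a (mem_subtype.1 ha)

def IsListColouringOn (G : SimpleGraph V) (L : V → Finset α) (S : Finset V) (c : V → α) :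
    Prop :=
  (∀ v ∈ S, c v ∈ L v) ∧ ∀ u ∈ S, ∀ v ∈ S, G.Adj u v → c u ≠ c v

theorem exists_isListColouringOn_of_sides [Nonempty α] [Fintype V] {G : SimpleGraph V}
    {f : V → Bool} (hf : ∀ u v, G.Adj u v → f u ≠ f v) (L : V → Finset α) (σ : α → Bool) :
    ∃ c, IsListColouringOn G L {v | ∃ a ∈ L v, σ a = f v} c := by
  let c (v : V) : α := Classical.epsilon fun a ↦ a ∈ L v ∧ σ a = f v
  have hc (v : V) (hv : v ∈ ({v | ∃ a ∈ L v, σ a = f v} : Finset V)) :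
      c v ∈ L v ∧ σ (c v) = f v :=
    Classical.epsilon_spec (by simpa using hv)
  refine ⟨c, fun v hv ↦ (hc v hv).1, fun u hu v hv huv hcuv ↦ hf u v huv ?_⟩
  rw [← (hc u hu).2, ← (hc v hv).2, hcuv]

theorem one_sub_half_pow_mul_le {k m t : ℕ} (h : k * 2 ^ t ≤ k + m) :
    (1 - (1 / 2 : ℚ) ^ t) * (k + m : ℕ) ≤ m := by
  have h' : (k : ℚ) * 2 ^ t ≤ k + m := by exact_mod_cast h
  have hinv : (1 / 2 : ℚ) ^ t * 2 ^ t = 1 := by rw [← mul_pow]; norm_num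
  push_cast
  nlinarith [mul_le_mul_of_nonneg_left h' (by positivity : (0 : ℚ) ≤ (1 / 2) ^ t)]

end

theorem partial_list_colouring_bipartite_general {V : Type*} [Fintype V]
    (G : SimpleGraph V)
    (hbip : ∃ f : V → Bool, ∀ u v, G.Adj u v → f u ≠ f v)
    (t : ℕ)
    (L : V → Finset ℕ) (hL : ∀ v, (L v).card = t) :
    ∃ S : Finset V,
      (1 - (1 / 2 : ℚ) ^ t) * Fintype.card V ≤ S.card ∧
      ∃ c : V → ℕ, (∀ v ∈ S, c v ∈ L v) ∧
        ∀ u ∈ S, ∀ v ∈ S, G.Adj u v → c u ≠ c v := by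
  obtain ⟨f, hf⟩ := hbip
  obtain ⟨σ, hσ⟩ := exists_card_filter_forall_mem_ne_mul_two_pow_le f L t hL
  obtain ⟨c, hc⟩ := exists_isListColouringOn_of_sides hf L σ
  refine ⟨_, ?_, c, hc⟩
  have hsplit := card_filter_add_card_filter_not (s := univ) fun v ↦ ∀ a ∈ L v, σ a ≠ f v
  push Not at hsplit
  rw [card_univ] at hsplit
  rw [← hsplit]
  exact one_sub_half_pow_mul_le (hsplit ▸ hσ)

/-- For every `t`-element list assignment `L`, a bipartite graph on `n` vertices
has an induced subgraph on at least `(1 - (1/2)^t)·n` vertices that is `L`-list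
colourable. -/
theorem partial_list_colouring_bipartite {V : Type*} [Fintype V]
    (G : SimpleGraph V)
    (hbip : ∃ f : V → Bool, ∀ u v, G.Adj u v → f u ≠ f v)
    (t : ℕ) (ht : 0 < t)
    (L : V → Finset ℕ) (hL : ∀ v, (L v).card = t) :
    ∃ S : Finset V,
      (1 - (1 / 2 : ℚ) ^ t) * Fintype.card V ≤ S.card ∧
      ∃ c : V → ℕ, (∀ v ∈ S, c v ∈ L v) ∧
        ∀ u ∈ S, ∀ v ∈ S, G.Adj u v → c u ≠ c v :=
  partial_list_colouring_bipartite_general G hbip t L hL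
end

section
/- Let G be a graph on n vertices with chromatic number χ and let t be a positive integer. Then for every assignment L of t-element colour lists to the vertices of G, there exists an induced subgraph of G on at least (1 - ((χ-1)/χ)^t)·n vertices that is L-list colourable. -/
/-!
Fix a proper colouring `f` of `G` with `χ` classes and map the colours to the classes by a
uniformly random `i`. Call `v` good if some `a ∈ L v` has `i a = f v`, and colour it by such an
`a`: adjacent good vertices lie in different classes, so their colours have different images
under `i`. A vertex is bad with probability `((χ - 1) / χ) ^ t`, so some `i` leaves at least
`(1 - ((χ - 1) / χ) ^ t) n` vertices good.
-/

open Finset Fintype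

namespace SimpleGraph

variable {V α β : Type*} (G : SimpleGraph V)

def IsListColorableOn (L : V → Finset β) (S : Finset V) : Prop :=
  ∃ c : V → β, (∀ v ∈ S, c v ∈ L v) ∧ ∀ u ∈ S, ∀ v ∈ S, G.Adj u v → c u ≠ c v

variable {G}

theorem Coloring.isListColorableOn_of_forall_exists [Nonempty β] (f : G.Coloring α)
    (L : V → Finset β) (i : β → α) {S : Finset V} (hS : ∀ v ∈ S, ∃ a ∈ L v, i a = f v) :
    G.IsListColorableOn L S := by
  classical
  have hc : ∀ v, ∃ b, v ∈ S → b ∈ L v ∧ i b = f v := fun v => by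
    by_cases hv : v ∈ S
    · obtain ⟨a, ha, hia⟩ := hS v hv
      exact ⟨a, fun _ => ⟨ha, hia⟩⟩
    · exact ⟨Classical.arbitrary β, fun h => absurd h hv⟩
  choose c hc using hc
  refine ⟨c, fun v hv => (hc v hv).1, fun u hu v hv huv hcuv => f.valid huv ?_⟩
  rw [← (hc u hu).2, ← (hc v hv).2, hcuv]

end SimpleGraph

theorem Fintype.card_filter_forall_ne {ι α : Type*} [Fintype ι] [DecidableEq ι] [Fintype α]
    [DecidableEq α] (s : Finset ι) (x : α) :
    #{i : ι → α | ∀ a ∈ s, i a ≠ x} = (card α - 1) ^ #s * card α ^ #sᶜ := by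
  have hpi : ({i : ι → α | ∀ a ∈ s, i a ≠ x} : Finset _) =
      piFinset fun a => if a ∈ s then univ.erase x else univ := by
    ext i
    simp only [mem_filter, mem_univ, true_and, mem_piFinset]
    refine forall_congr' fun a => ?_
    split_ifs with ha <;> simp [ha]
  rw [hpi, card_piFinset]
  simp only [apply_ite Finset.card, card_erase_of_mem (mem_univ x), card_univ]
  rw [prod_ite, prod_const, prod_const, filter_not, filter_mem_eq_inter, univ_inter,
    ← compl_eq_univ_sdiff]

section Averaging

variable {V ι β α : Type*} [Fintype V] [Fintype α] [DecidableEq α]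

theorem sum_card_filter_forall_ne [Fintype ι] [DecidableEq ι] (L : V → Finset ι) (g : V → α) :
    ∑ i : ι → α, #{v | ∀ a ∈ L v, i a ≠ g v} =
      ∑ v, (card α - 1) ^ #(L v) * card α ^ #(L v)ᶜ := by
  simp only [card_filter]
  rw [sum_comm]
  simp only [← card_filter, Fintype.card_filter_forall_ne]

theorem exists_card_filter_forall_ne_le_of_fintype [Fintype ι] [DecidableEq ι] [Nonempty α]
    (L : V → Finset ι) (g : V → α) :
    ∃ i : ι → α, (#{v | ∀ a ∈ L v, i a ≠ g v} : ℚ) ≤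
      ∑ v, (((card α : ℚ) - 1) / card α) ^ #(L v) := by
  suffices ∑ i : ι → α, (#{v | ∀ a ∈ L v, i a ≠ g v} : ℚ) =
      ∑ _i : ι → α, ∑ v, (((card α : ℚ) - 1) / card α) ^ #(L v) by
    obtain ⟨i, -, hi⟩ := exists_le_of_sum_le univ_nonempty this.le
    exact ⟨i, hi⟩
  rw [← Nat.cast_sum, sum_card_filter_forall_ne, sum_const, card_univ, card_fun, nsmul_eq_mul,
    mul_sum, Nat.cast_sum]
  refine sum_congr rfl fun v _ => ?_
  rw [← card_add_card_compl (L v), Nat.cast_mul, Nat.cast_pow, Nat.cast_pow,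
    Nat.cast_sub card_pos, Nat.cast_one, Nat.cast_pow, pow_add, div_pow]
  field_simp

theorem exists_card_filter_forall_ne_le [DecidableEq β] [Nonempty α] (L : V → Finset β)
    (g : V → α) :
    ∃ i : β → α, (#{v | ∀ a ∈ L v, i a ≠ g v} : ℚ) ≤
      ∑ v, (((card α : ℚ) - 1) / card α) ^ #(L v) := by
  set D := univ.biUnion L
  have hD : ∀ v, ∀ a ∈ L v, a ∈ D := fun v a ha => mem_biUnion.mpr ⟨v, mem_univ v, ha⟩
  obtain ⟨i, hi⟩ :=
    exists_card_filter_forall_ne_le_of_fintype (fun v => (L v).subtype (· ∈ D)) g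
  set i' := Function.extend Subtype.val i fun _ => Classical.arbitrary α
  have hi' : ∀ a (ha : a ∈ D), i ⟨a, ha⟩ = i' a := fun a ha =>
    (Subtype.val_injective.extend_apply i _ ⟨a, ha⟩).symm
  refine ⟨i', ?_⟩
  convert hi using 5 with v - v -
  · simp only [mem_subtype, Subtype.forall, hi']
    exact ⟨fun h a _ ha => h a ha, fun h a ha => h a (hD v a ha) ha⟩
  · rw [Finset.card_subtype, filter_true_of_mem (hD v)]

end Averaging

namespace SimpleGraph.Coloring

variable {V α β : Type*} [Fintype V] [Fintype α] {G : SimpleGraph V}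

theorem exists_isListColorableOn_card_ge [Nonempty β] (f : G.Coloring α) (L : V → Finset β)
    {t : ℕ} (hL : ∀ v, #(L v) = t) :
    ∃ S : Finset V, (1 - (((card α : ℚ) - 1) / card α) ^ t) * card V ≤ #S ∧
      G.IsListColorableOn L S := by
  classical
  cases isEmpty_or_nonempty V with
  | inl hV => exact ⟨∅, by simp, fun _ => Classical.arbitrary β, by simp, by simp⟩
  | inr hV =>
    have : Nonempty α := ⟨f (Classical.arbitrary V)⟩
    obtain ⟨i, hi⟩ := exists_card_filter_forall_ne_le L f
    refine ⟨({v | ∃ a ∈ L v, i a = f v} : Finset V), ?_,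
      f.isListColorableOn_of_forall_exists L i fun v hv => (mem_filter.mp hv).2⟩
    have hcompl : #{v | ∃ a ∈ L v, i a = f v} = card V - #{v | ∀ a ∈ L v, i a ≠ f v} := by
      refine eq_tsub_of_add_eq ?_
      simpa only [not_exists, not_and, card_univ] using
        card_filter_add_card_filter_not (s := univ) fun v => ∃ a ∈ L v, i a = f v
    simp only [hL, sum_const, card_univ, nsmul_eq_mul] at hi
    rw [hcompl, Nat.cast_sub (card_le_univ _)]
    linarith

end SimpleGraph.Coloring

theorem partial_list_colouring_chromatic_bound_general {V : Type*} [Fintype V]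
    (G : SimpleGraph V) (χ : ℕ) (hχ : G.chromaticNumber = χ)
    (t : ℕ)
    (L : V → Finset ℕ) (hL : ∀ v, (L v).card = t) :
    ∃ S : Finset V,
      (1 - (((χ : ℚ) - 1) / χ) ^ t) * Fintype.card V ≤ S.card ∧
      ∃ c : V → ℕ, (∀ v ∈ S, c v ∈ L v) ∧
        ∀ u ∈ S, ∀ v ∈ S, G.Adj u v → c u ≠ c v := by
  obtain ⟨f⟩ : G.Colorable χ := G.chromaticNumber_le_iff_colorable.mp hχ.le
  simpa only [Fintype.card_fin, SimpleGraph.IsListColorableOn] using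
    f.exists_isListColorableOn_card_ge L hL

/-- For every `t`-element list assignment `L`, a graph on `n` vertices with
chromatic number `χ` has an induced subgraph on at least `(1 - ((χ-1)/χ)^t)·n`
vertices that is `L`-list colourable. -/
theorem partial_list_colouring_chromatic_bound {V : Type*} [Fintype V]
    (G : SimpleGraph V) (χ : ℕ) (hχ : G.chromaticNumber = χ)
    (t : ℕ) (ht : 0 < t)
    (L : V → Finset ℕ) (hL : ∀ v, (L v).card = t) :
    ∃ S : Finset V,
      (1 - (((χ : ℚ) - 1) / χ) ^ t) * Fintype.card V ≤ S.card ∧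
      ∃ c : V → ℕ, (∀ v ∈ S, c v ∈ L v) ∧
        ∀ u ∈ S, ∀ v ∈ S, G.Adj u v → c u ≠ c v :=
  partial_list_colouring_chromatic_bound_general G χ hχ t L hL
end

section
/- Let H1 be the graph on vertices v1,...,v8 with edges v1v2, v1v3, v1v4, v2v3, v3v4, v2v5, v3v6, v4v7, v5v6, v6v7, v5v8, v7v8, v6v8, v2v7 (the block of the graph H from the paper: a hexagonal wheel-like 2-connected graph on 8 vertices consisting of the outer cycle v1v2v5v8v7v4 with chords and inner vertices v3, v6 joined as specified). Then H1 is (3,3,3,3,3,3,3,2)-list colourable with respect to the ordering v1,...,v8: for every list assignment with |l(vi)|=3 for i=1,...,7 and |l(v8)|=2, there is a proper colouring of H1 choosing each vertex's colour from its list. -/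
/-!
Both `{0, 1, 2, 3}` and `{4, 5, 6, 7}` induce a diamond (`K₄` minus the edge `13`, resp. `46`),
and a diamond is colourable from lists of sizes `3, 2, 2, 2` with the long list on a vertex of
degree three. Colour `4, 5, 6, 7` first so that vertex `1`, which sees both `4` and `6`, keeps two
colours: if `4` and `6` share a colour, use it on both; otherwise the six colours of `l 4 ∪ l 6`
cannot all lie in `l 1`, and one of `4, 6` can take a colour outside `l 1`. Every vertex of
`0, 1, 2, 3` then keeps at least two colours (vertex `0` all three), enough for its diamond.
-/

/-- The block `H₁` of the graph `H` from the paper, on vertices `0,…,7` standing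
for `v₁,…,v₈`, with edges `v₁v₂, v₁v₃, v₁v₄, v₂v₃, v₃v₄, v₂v₅, v₃v₆, v₄v₇, v₅v₆,
v₆v₇, v₅v₈, v₇v₈, v₆v₈, v₂v₇`. -/
def H1 : SimpleGraph (Fin 8) :=
  SimpleGraph.fromEdgeSet {s(0, 1), s(0, 2), s(0, 3), s(1, 2), s(2, 3), s(1, 4),
    s(2, 5), s(3, 6), s(4, 5), s(5, 6), s(4, 7), s(6, 7), s(5, 7), s(1, 6)}

open Finset

namespace Finset

variable {α : Type*} [DecidableEq α]

lemma exists_mem_ne_ne {s : Finset α} (hs : 2 < #s) (a b : α) : ∃ c ∈ s, c ≠ a ∧ c ≠ b := by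
  obtain ⟨c, hc, hab⟩ := exists_mem_notMem_of_card_lt_card (card_le_two.trans_lt hs)
  simp only [mem_insert, mem_singleton, not_or] at hab
  exact ⟨c, hc, hab⟩

lemma one_lt_card_sdiff_singleton {s : Finset α} (hs : 2 < #s) (a : α) : 1 < #(s \ {a}) := by
  have := le_card_sdiff {a} s
  rw [card_singleton] at this
  omega

lemma one_lt_card_sdiff_pair {s : Finset α} (hs : 2 < #s) {a : α} (ha : a ∉ s) (b : α) :
    1 < #(s \ {a, b}) := by
  rw [sdiff_insert_of_notMem ha]
  exact one_lt_card_sdiff_singleton hs b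

end Finset

section Diamond

variable {α : Type*} [DecidableEq α]

lemma exists_diamond_coloring_of_notMem {P R S : Finset α} {q : α} (hqS : q ∉ S)
    (hP : 2 < #P) (hR : 1 < #R) (hS : 1 < #S) :
    ∃ p ∈ P, ∃ r ∈ R, ∃ s ∈ S, p ≠ q ∧ p ≠ r ∧ p ≠ s ∧ q ≠ r ∧ q ≠ s := by
  obtain ⟨r, hr, hrq⟩ := exists_mem_ne hR q
  obtain ⟨p, hp, hpq, hpr⟩ := exists_mem_ne_ne hP q r
  obtain ⟨s, hs, hsp⟩ := exists_mem_ne hS p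
  exact ⟨p, hp, r, hr, s, hs, hpq, hpr, hsp.symm, hrq.symm, fun hqs => hqS (hqs ▸ hs)⟩

/-- List colouring of the diamond with hubs `p, q` and rims `r, s`. -/
theorem exists_diamond_coloring {P Q R S : Finset α}
    (hP : 2 < #P) (hQ : 1 < #Q) (hR : 1 < #R) (hS : 1 < #S) :
    ∃ p ∈ P, ∃ q ∈ Q, ∃ r ∈ R, ∃ s ∈ S, p ≠ q ∧ p ≠ r ∧ p ≠ s ∧ q ≠ r ∧ q ≠ s := by
  by_cases hRS : Disjoint R S
  · obtain ⟨q, hq⟩ := card_pos.mp (by omega : 0 < #Q)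
    by_cases hqS : q ∈ S
    · obtain ⟨p, hp, s, hs, r, hr, hpq, hps, hpr, hqs, hqr⟩ :=
        exists_diamond_coloring_of_notMem (fun hqR => disjoint_left.mp hRS hqR hqS) hP hS hR
      exact ⟨p, hp, q, hq, r, hr, s, hs, hpq, hpr, hps, hqr, hqs⟩
    · obtain ⟨p, hp, r, hr, s, hs, h⟩ := exists_diamond_coloring_of_notMem hqS hP hR hS
      exact ⟨p, hp, q, hq, r, hr, s, hs, h⟩
  · obtain ⟨y, hyR, hyS⟩ := not_disjoint_iff.mp hRS
    obtain ⟨q, hq, hqy⟩ := exists_mem_ne hQ y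
    obtain ⟨p, hp, hpq, hpy⟩ := exists_mem_ne_ne hP q y
    exact ⟨p, hp, q, hq, y, hyR, y, hyS, hpq, hpy, hpy, hqy, hqy⟩

lemma exists_diamond_coloring_sparing_of_not_disjoint {E F G H B : Finset α}
    (hEG : ¬Disjoint E G) (hF : 2 < #F) (hH : 1 < #H) (hB : 2 < #B) :
    ∃ e ∈ E, ∃ f ∈ F, ∃ g ∈ G, ∃ h ∈ H,
      e ≠ f ∧ e ≠ h ∧ f ≠ g ∧ f ≠ h ∧ g ≠ h ∧ 1 < #(B \ {e, g}) := by
  obtain ⟨x, hxE, hxG⟩ := not_disjoint_iff.mp hEG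
  obtain ⟨h, hh, hhx⟩ := exists_mem_ne hH x
  obtain ⟨f, hf, hfx, hfh⟩ := exists_mem_ne_ne hF x h
  refine ⟨x, hxE, f, hf, x, hxG, h, hh, hfx.symm, hhx.symm, hfx, hfh, hhx.symm, ?_⟩
  rw [pair_eq_singleton]
  exact one_lt_card_sdiff_singleton hB x

lemma exists_diamond_coloring_sparing_of_disjoint {E F G H B : Finset α} (hEG : Disjoint E G)
    (hE : 2 < #E) (hF : 1 < #F) (hG : 2 < #G) (hH : H.Nonempty) (hB : #B = 3) :
    ∃ e ∈ E, ∃ f ∈ F, ∃ g ∈ G, ∃ h ∈ H,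
      e ≠ f ∧ e ≠ h ∧ f ≠ g ∧ f ≠ h ∧ g ≠ h ∧ 1 < #(B \ {e, g}) := by
  obtain ⟨h, hh⟩ := hH
  obtain ⟨f, hf, hfh⟩ := exists_mem_ne hF h
  have hcard : #B < #((E ∪ G) \ {h, f}) := by
    have := le_card_sdiff {h, f} (E ∪ G)
    rw [card_union_of_disjoint hEG] at this
    have := card_le_two (a := h) (b := f)
    omega
  obtain ⟨z, hz, hzB⟩ := exists_mem_notMem_of_card_lt_card hcard
  simp only [mem_sdiff, mem_union, mem_insert, mem_singleton, not_or] at hz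
  obtain ⟨hzE | hzG, hzh, hzf⟩ := hz
  · obtain ⟨g, hg, hgh, hgf⟩ := exists_mem_ne_ne hG h f
    exact ⟨z, hzE, f, hf, g, hg, h, hh, hzf, hzh, hgf.symm, hfh, hgh,
      one_lt_card_sdiff_pair (by omega) hzB g⟩
  · obtain ⟨e, he, heh, hef⟩ := exists_mem_ne_ne hE h f
    refine ⟨e, he, f, hf, z, hzG, h, hh, hef, heh, Ne.symm hzf, hfh, hzh, ?_⟩
    rw [pair_comm]
    exact one_lt_card_sdiff_pair (by omega) hzB e

/-- List colouring of the diamond with hubs `f, h` and rims `e, g` that leaves two colours of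
`B` unused on the rims. -/
theorem exists_diamond_coloring_sparing {E F G H B : Finset α}
    (hE : 2 < #E) (hF : 2 < #F) (hG : 2 < #G) (hH : 1 < #H) (hB : #B = 3) :
    ∃ e ∈ E, ∃ f ∈ F, ∃ g ∈ G, ∃ h ∈ H,
      e ≠ f ∧ e ≠ h ∧ f ≠ g ∧ f ≠ h ∧ g ≠ h ∧ 1 < #(B \ {e, g}) := by
  by_cases hEG : Disjoint E G
  · exact exists_diamond_coloring_sparing_of_disjoint hEG hE (by omega) hG
      (card_pos.mp (by omega)) hB
  · exact exists_diamond_coloring_sparing_of_not_disjoint hEG hF hH (by omega)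

end Diamond

lemma H1_adj_ne {β : Type*} {c : Fin 8 → β}
    (h01 : c 0 ≠ c 1) (h02 : c 0 ≠ c 2) (h03 : c 0 ≠ c 3) (h12 : c 1 ≠ c 2) (h23 : c 2 ≠ c 3)
    (h14 : c 1 ≠ c 4) (h25 : c 2 ≠ c 5) (h36 : c 3 ≠ c 6) (h45 : c 4 ≠ c 5) (h56 : c 5 ≠ c 6)
    (h47 : c 4 ≠ c 7) (h67 : c 6 ≠ c 7) (h57 : c 5 ≠ c 7) (h16 : c 1 ≠ c 6)
    {u v : Fin 8} (huv : H1.Adj u v) : c u ≠ c v := by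
  simp only [H1, SimpleGraph.fromEdgeSet_adj, Set.mem_insert_iff, Set.mem_singleton_iff,
    Sym2.eq_iff] at huv
  obtain ⟨h | h | h | h | h | h | h | h | h | h | h | h | h | h, -⟩ := huv <;>
    obtain ⟨rfl, rfl⟩ | ⟨rfl, rfl⟩ := h <;> first | assumption | exact Ne.symm ‹_›

/-- `H₁` is `(3,3,3,3,3,3,3,2)`-list colourable. -/
theorem H1_list_colourable
    (l : Fin 8 → Finset ℕ)
    (hl : ∀ i : Fin 8, i ≠ 7 → (l i).card = 3) (hl7 : (l 7).card = 2) :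
    ∃ c : Fin 8 → ℕ, (∀ v, c v ∈ l v) ∧
      ∀ u v, H1.Adj u v → c u ≠ c v := by
  have h3 (i : Fin 8) (hi : i ≠ 7 := by decide) : 2 < #(l i) := by rw [hl i hi]; omega
  obtain ⟨c4, hc4, c5, hc5, c6, hc6, c7, hc7, h45, h47, h56, h57, h67, hl1⟩ :=
    exists_diamond_coloring_sparing (h3 4) (h3 5) (h3 6) (by omega : 1 < #(l 7)) (hl 1 (by decide))
  obtain ⟨c0, hc0, c2, hc2, c1, hc1, c3, hc3, h02, h01, h03, h12, h23⟩ :=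
    exists_diamond_coloring (h3 0) (one_lt_card_sdiff_singleton (h3 2) c5) hl1
      (one_lt_card_sdiff_singleton (h3 3) c6)
  simp only [mem_sdiff, mem_insert, mem_singleton, not_or] at hc1 hc2 hc3
  obtain ⟨hc1, h14, h16⟩ := hc1
  obtain ⟨hc2, h25⟩ := hc2
  obtain ⟨hc3, h36⟩ := hc3
  refine ⟨![c0, c1, c2, c3, c4, c5, c6, c7], fun v => ?_, fun u v => ?_⟩
  · fin_cases v <;> assumption
  · exact H1_adj_ne h01 h02 h03 h12.symm h23 h14 h25 h36 h45 h56 h47 h67 h57 h16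
end

section
/- Let G be a graph, let L be a list assignment on its vertices, and suppose S ⊆ V(G) consists of three vertices u, v, w with v, w ∈ N(u), deg_G(v) = deg_G(w) = 2, and each list has size at least 2. If G \ S has an induced subgraph H' on m vertices that is L-list colourable, then G has an induced subgraph on m + 2 vertices that is L-list colourable (namely H' together with v and w). -/
/-!
Colour `v` and then `w` greedily on top of the colouring of `H'`. When a vertex of degree 2
adjacent to the uncoloured vertex `u` is added, at most one of its neighbours is already
coloured, so a list of size 2 always leaves a free colour.
-/

namespace SimpleGraph

variable {V α : Type*} (G : SimpleGraph V)

def IsListColouringOn (L : V → Finset α) (T : Finset V) (c : V → α) : Prop :=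
  (∀ x ∈ T, c x ∈ L x) ∧ ∀ x ∈ T, ∀ y ∈ T, G.Adj x y → c x ≠ c y

variable {G} [DecidableEq V]

theorem card_neighborFinset_inter_lt_degree {v u : V} [Fintype (G.neighborSet v)]
    {T : Finset V} (hvu : G.Adj v u) (hu : u ∉ T) :
    (G.neighborFinset v ∩ T).card < G.degree v := by
  rw [← card_neighborFinset_eq_degree]
  refine Finset.card_lt_card (Finset.ssubset_iff_of_subset Finset.inter_subset_left |>.2 ?_)
  exact ⟨u, (mem_neighborFinset G v u).2 hvu, fun h => hu (Finset.mem_inter.1 h).2⟩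

theorem IsListColouringOn.exists_insert [DecidableEq α] {L : V → Finset α} {T : Finset V}
    {c : V → α} (hc : G.IsListColouringOn L T c) {v : V} [Fintype (G.neighborSet v)]
    (hv : v ∉ T) (hlt : (G.neighborFinset v ∩ T).card < (L v).card) :
    ∃ c' : V → α, G.IsListColouringOn L (insert v T) c' := by
  have hfree : ¬ L v ⊆ (G.neighborFinset v ∩ T).image c := fun h =>
    (Finset.card_le_card h |>.trans Finset.card_image_le).not_gt hlt
  obtain ⟨a, haL, ha⟩ := Finset.not_subset.1 hfree
  have hupdate : ∀ x ∈ T, Function.update c v a x = c x := fun x hx =>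
    Function.update_of_ne (ne_of_mem_of_not_mem hx hv) _ _
  have hnew : ∀ y ∈ T, G.Adj v y → a ≠ c y := fun y hy hadj hay =>
    ha (Finset.mem_image.2 ⟨y, Finset.mem_inter.2 ⟨(mem_neighborFinset G v y).2 hadj, hy⟩,
      hay.symm⟩)
  refine ⟨Function.update c v a, ?_, ?_⟩
  · intro x hx
    rcases Finset.mem_insert.1 hx with rfl | hxT
    · simpa using haL
    · simpa [hupdate x hxT] using hc.1 x hxT
  · intro x hx y hy hadj
    rcases Finset.mem_insert.1 hx with rfl | hxT <;> rcases Finset.mem_insert.1 hy with rfl | hyT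
    · exact absurd hadj (G.irrefl)
    · simpa [hupdate y hyT] using hnew y hyT hadj
    · simpa [hupdate x hxT] using (hnew x hxT hadj.symm).symm
    · simpa [hupdate x hxT, hupdate y hyT] using hc.2 x hxT y hyT hadj

end SimpleGraph

open SimpleGraph in
/-- If `u, v, w` are vertices with `v, w` distinct degree-2 neighbours of `u`, all
lists have size at least 2, and `G \ {u,v,w}` has an induced subgraph on `m`
vertices that is `L`-list colourable, then `G` has an induced subgraph on `m + 2`
vertices that is `L`-list colourable. -/
theorem extend_partial_colouring_by_two {V : Type*} [Fintype V] [DecidableEq V]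
    (G : SimpleGraph V) [DecidableRel G.Adj]
    (L : V → Finset ℕ) (hL : ∀ x, 2 ≤ (L x).card)
    (u v w : V) (hvw : v ≠ w) (huv : G.Adj u v) (huw : G.Adj u w)
    (hv : G.degree v = 2) (hw : G.degree w = 2)
    (m : ℕ) (T : Finset V) (hTu : u ∉ T) (hTv : v ∉ T) (hTw : w ∉ T)
    (hTcard : T.card = m)
    (hTcol : ∃ c : V → ℕ, (∀ x ∈ T, c x ∈ L x) ∧
      ∀ x ∈ T, ∀ y ∈ T, G.Adj x y → c x ≠ c y) :
    ∃ T' : Finset V, T'.card = m + 2 ∧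
      ∃ c : V → ℕ, (∀ x ∈ T', c x ∈ L x) ∧
        ∀ x ∈ T', ∀ y ∈ T', G.Adj x y → c x ≠ c y := by
  obtain ⟨c, hc⟩ : ∃ c, G.IsListColouringOn L T c := hTcol
  have huT : u ∉ insert v T := by simp [huv.ne, hTu]
  have hwT : w ∉ insert v T := by simp [hvw.symm, hTw]
  obtain ⟨c₁, hc₁⟩ := hc.exists_insert hTv
    ((card_neighborFinset_inter_lt_degree huv.symm hTu).trans_le (hv ▸ hL v))
  obtain ⟨c₂, hc₂⟩ := hc₁.exists_insert hwT
    ((card_neighborFinset_inter_lt_degree huw.symm huT).trans_le (hw ▸ hL w))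
  refine ⟨insert w (insert v T), ?_, c₂, hc₂⟩
  rw [Finset.card_insert_of_notMem hwT, Finset.card_insert_of_notMem hTv, hTcard]
end
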